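/- Let L ⊆ ℤ^(ℕ) be a Sym-invariant lattice and let u ∈ L. Then: (i) for every i ∈ ℕ, the element u(i)·(e_1 − e_2) belongs to L; (ii) the element g_L·(e_1 − e_2) belongs to L. -/
import Mathlib


open Finsupp

/-- A permutation of `ℕ` that moves only finitely many points:
an element of the infinite symmetric group `Sym`. -/
def IsFinPerm (σ : Equiv.Perm ℕ) : Prop := {i | σ i ≠ i}.Finite

/-- Membership in `Sym(n)`: permutations of `ℕ` fixing every index `≥ n`
(the indices `0, 1, …, n-1` play the role of `[n] = {1, …, n}`). -/
def InSymN (n : ℕ) (σ : Equiv.Perm ℕ) : Prop := ∀ i, n ≤ i → σ i = i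

/-- `u ∈ ℤ_{≥0}^{(I)}`. -/
def FsNonneg {I : Type*} (u : I →₀ ℤ) : Prop := ∀ i, 0 ≤ u i

/-- The partial order `⊑`. -/
def Sqle {I : Type*} (u v : I →₀ ℤ) : Prop := ∀ i, 0 ≤ u i * v i ∧ |u i| ≤ |v i|

/-- The Graver basis of (the underlying set of) a lattice `L`:
the `⊑`-minimal elements of `L \ {0}`. -/
def GraverBasis {I : Type*} (L : Set (I →₀ ℤ)) : Set (I →₀ ℤ) :=
  {u | u ∈ L ∧ u ≠ 0 ∧ ∀ v ∈ L, v ≠ 0 → Sqle v u → v = u}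

/-- The `L`-fiber of `u`. -/
def latFiber {I : Type*} (L : Set (I →₀ ℤ)) (u : I →₀ ℤ) : Set (I →₀ ℤ) :=
  {v | FsNonneg v ∧ u - v ∈ L}

/-- `B` is a Markov basis of `L`: for each nonnegative `u` the graph on the fiber
`F_L(u)` with edges `v ~ w` whenever `v - w ∈ B ∪ (-B)` is connected. -/
def IsMarkovBasis {I : Type*} (L B : Set (I →₀ ℤ)) : Prop :=
  ∀ u, FsNonneg u → ∀ v ∈ latFiber L u, ∀ w ∈ latFiber L u,
    Relation.ReflTransGen
      (fun x y => x ∈ latFiber L u ∧ y ∈ latFiber L u ∧ (x - y ∈ B ∨ y - x ∈ B)) v w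

/-- A term order on `ℤ_{≥0}^{(I)}`: an additive well-order on the nonnegative elements. -/
structure TermOrderZ (I : Type*) where
  lt : (I →₀ ℤ) → (I →₀ ℤ) → Prop
  irrefl : ∀ u, FsNonneg u → ¬ lt u u
  trans : ∀ u v w, FsNonneg u → FsNonneg v → FsNonneg w → lt u v → lt v w → lt u w
  total : ∀ u v, FsNonneg u → FsNonneg v → u ≠ v → lt u v ∨ lt v u
  min_exists : ∀ S : Set (I →₀ ℤ), (∀ u ∈ S, FsNonneg u) → S.Nonempty →
    ∃ m ∈ S, ∀ u ∈ S, u ≠ m → ¬ lt u m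
  add_right : ∀ u v w, FsNonneg u → FsNonneg v → FsNonneg w → lt u v → lt (u + w) (v + w)

/-- There is a directed path (w.r.t. `lt`, with moves from `B ∪ (-B)`) inside the fiber
of `u` from `u` to the `lt`-minimal element of the fiber. -/
def GroebnerPath {I : Type*} (L : Set (I →₀ ℤ)) (lt : (I →₀ ℤ) → (I →₀ ℤ) → Prop)
    (B : Set (I →₀ ℤ)) (u : I →₀ ℤ) : Prop :=
  ∃ (s : ℕ) (v : ℕ → (I →₀ ℤ)), v 0 = u ∧ (∀ t ≤ s, v t ∈ latFiber L u) ∧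
    (∀ t < s, lt (v (t + 1)) (v t) ∧ (v t - v (t + 1) ∈ B ∨ v (t + 1) - v t ∈ B)) ∧
    (∀ w ∈ latFiber L u, w ≠ v s → lt (v s) w)

/-- `B` is a Gröbner basis of `L` with respect to the term order `lt`. -/
def IsGroebnerBasis {I : Type*} (L : Set (I →₀ ℤ))
    (lt : (I →₀ ℤ) → (I →₀ ℤ) → Prop) (B : Set (I →₀ ℤ)) : Prop :=
  ∀ u, FsNonneg u → GroebnerPath L lt B u

/-- `H` is a Hilbert basis of the (set underlying a) monoid `M`:
a generating set of `M` contained in every generating set of `M`. -/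
def IsHilbertBasis {N : Type*} [AddCommMonoid N] (M H : Set N) : Prop :=
  H ⊆ M ∧ (AddSubmonoid.closure H : Set N) = M ∧
    ∀ A ⊆ M, (AddSubmonoid.closure A : Set N) = M → H ⊆ A

/-- `u` is an irreducible element of `M`. -/
def IsIrredElem {N : Type*} [AddCommMonoid N] (M : Set N) (u : N) : Prop :=
  u ∈ M ∧ u ≠ 0 ∧ ∀ v ∈ M, ∀ w ∈ M, u = v + w → v = 0 ∨ w = 0

/-- The action of a permutation of `ℕ` on `ℤ^{(ℕ^d × [c])}`:
`(σ·u)((σ i₁, …, σ i_d), j) = u((i₁, …, i_d), j)`. -/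
noncomputable def permActd (d c : ℕ) (σ : Equiv.Perm ℕ) (u : (Fin d → ℕ) × Fin c →₀ ℤ) :
    (Fin d → ℕ) × Fin c →₀ ℤ :=
  Finsupp.equivMapDomain
    (Equiv.prodCongr ((Equiv.refl (Fin d)).arrowCongr σ) (Equiv.refl (Fin c))) u

/-- The action of a permutation of `ℕ` on `ℤ^{(ℕ × [c])}`: `(σ·u)(σ i, j) = u(i, j)`. -/
noncomputable def permAct1 (c : ℕ) (σ : Equiv.Perm ℕ) (u : ℕ × Fin c →₀ ℤ) :
    ℕ × Fin c →₀ ℤ :=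
  Finsupp.equivMapDomain (Equiv.prodCongr σ (Equiv.refl (Fin c))) u

/-- The action of a permutation of `ℕ` on `ℤ^{(ℕ)}`: `(σ·u)(σ i) = u i`. -/
noncomputable def permAct0 (σ : Equiv.Perm ℕ) (u : ℕ →₀ ℤ) : ℕ →₀ ℤ :=
  Finsupp.equivMapDomain σ u

/-- `Sym(B)` for `B ⊆ ℤ^{(ℕ^d × [c])}`. -/
def symOrbitd (d c : ℕ) (B : Set ((Fin d → ℕ) × Fin c →₀ ℤ)) :
    Set ((Fin d → ℕ) × Fin c →₀ ℤ) :=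
  {w | ∃ σ, IsFinPerm σ ∧ ∃ b ∈ B, w = permActd d c σ b}

/-- `Sym(n)(B)` for `B ⊆ ℤ^{(ℕ^d × [c])}`. -/
def symOrbitNd (d c n : ℕ) (B : Set ((Fin d → ℕ) × Fin c →₀ ℤ)) :
    Set ((Fin d → ℕ) × Fin c →₀ ℤ) :=
  {w | ∃ σ, InSymN n σ ∧ ∃ b ∈ B, w = permActd d c σ b}

/-- `Sym(B)` for `B ⊆ ℤ^{(ℕ × [c])}`. -/
def symOrbit1 (c : ℕ) (B : Set (ℕ × Fin c →₀ ℤ)) : Set (ℕ × Fin c →₀ ℤ) :=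
  {w | ∃ σ, IsFinPerm σ ∧ ∃ b ∈ B, w = permAct1 c σ b}

/-- `Sym(B)` for `B ⊆ ℤ^{(ℕ)}`. -/
def symOrbit0 (B : Set (ℕ →₀ ℤ)) : Set (ℕ →₀ ℤ) :=
  {w | ∃ σ, IsFinPerm σ ∧ ∃ b ∈ B, w = permAct0 σ b}

/-- `supp(u) ⊆ I_n = [n]^d × [c]`. -/
def SuppIn (d c n : ℕ) (u : (Fin d → ℕ) × Fin c →₀ ℤ) : Prop :=
  ∀ p : (Fin d → ℕ) × Fin c, u p ≠ 0 → ∀ k, p.1 k < n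

/-- `ℤ^{(I_n)}`, for `I_n = [n]^d × [c]`, as a subgroup of `ℤ^{(ℕ^d × [c])}`. -/
noncomputable def suppSubgroup (d c n : ℕ) : AddSubgroup ((Fin d → ℕ) × Fin c →₀ ℤ) where
  carrier := {u | SuppIn d c n u}
  zero_mem' := by intro p hp; simp at hp
  add_mem' := by
    intro a b ha hb p hp k
    by_cases h : a p = 0
    · refine hb p ?_ k
      intro hbp
      exact hp (by simp [h, hbp])
    · exact ha p h k
  neg_mem' := by
    intro a ha p hp k
    refine ha p ?_ k
    intro hap
    exact hp (by simp [hap])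

/-- The positive part `u⁺`. -/
noncomputable def fsPos {I : Type*} (u : I →₀ ℤ) : I →₀ ℤ :=
  u.mapRange (fun z => max z 0) (by simp)

/-- The negative part `u⁻`. -/
noncomputable def fsNeg {I : Type*} (u : I →₀ ℤ) : I →₀ ℤ :=
  u.mapRange (fun z => max (-z) 0) (by simp)


lemma swap_isFinPerm (a b : ℕ) : IsFinPerm (Equiv.swap a b) := by
  apply Set.Finite.subset (Set.toFinite ({a, b} : Set ℕ))
  intro x hx
  by_contra h
  simp only [Set.mem_insert_iff, Set.mem_singleton_iff] at h
  push_neg at h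
  exact hx (Equiv.swap_apply_of_ne_of_ne h.1 h.2)

lemma permAct0_smul_diff (σ : Equiv.Perm ℕ) (z : ℤ) (a b : ℕ) :
    permAct0 σ (z • (Finsupp.single a (1 : ℤ) - Finsupp.single b 1)) =
      z • (Finsupp.single (σ a) (1 : ℤ) - Finsupp.single (σ b) 1) := by
  ext k
  simp [permAct0, Finsupp.equivMapDomain_apply, Finsupp.single_apply,
    Equiv.eq_symm_apply, eq_comm]

lemma key_step (L : AddSubgroup (ℕ →₀ ℤ))
    (hL : ∀ σ, IsFinPerm σ → ∀ u ∈ L, permAct0 σ u ∈ L)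
    (u : ℕ →₀ ℤ) (hu : u ∈ L) (i : ℕ) :
    (u i) • (Finsupp.single 0 (1 : ℤ) - Finsupp.single 1 (1 : ℤ)) ∈ L := by
  set j : ℕ := u.support.sup id + i + 2 with hj
  have hji : j ≠ i := by omega
  have hj0 : j ≠ 0 := by omega
  have hj1 : j ≠ 1 := by omega
  have hjs : u j = 0 := by
    by_contra h
    have h2 : j ∈ u.support := Finsupp.mem_support_iff.mpr h
    have h3 : id j ≤ u.support.sup id := Finset.le_sup (f := id) h2
    simp only [id] at h3
    omega
  have h1 : u - permAct0 (Equiv.swap i j) u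
      = (u i) • (Finsupp.single i (1 : ℤ) - Finsupp.single j 1) := by
    ext k
    simp only [Finsupp.sub_apply, permAct0, Finsupp.equivMapDomain_apply,
      Equiv.symm_swap, Finsupp.smul_apply, Finsupp.single_apply, smul_eq_mul]
    rcases eq_or_ne k i with rfl | hki
    · rw [Equiv.swap_apply_left]
      simp [hji, hji.symm, hjs]
    · rcases eq_or_ne k j with rfl | hkj
      · rw [Equiv.swap_apply_right]
        simp [hji, hji.symm, hjs]
      · rw [Equiv.swap_apply_of_ne_of_ne hki hkj]
        simp [Ne.symm hki, Ne.symm hkj]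
  have hmem : (u i) • (Finsupp.single i (1 : ℤ) - Finsupp.single j 1) ∈ L := by
    rw [← h1]
    exact sub_mem hu (hL _ (swap_isFinPerm i j) u hu)
  have h2 := hL _ (swap_isFinPerm i 0) _ hmem
  rw [permAct0_smul_diff] at h2
  rw [Equiv.swap_apply_left, Equiv.swap_apply_of_ne_of_ne hji hj0] at h2
  have h3 := hL _ (swap_isFinPerm j 1) _ h2
  rw [permAct0_smul_diff] at h3
  rw [Equiv.swap_apply_left, Equiv.swap_apply_of_ne_of_ne (Ne.symm hj0) one_ne_zero.symm] at h3
  exact h3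

/-- For a `Sym`-invariant lattice `L ⊆ ℤ^{(ℕ)}` and `u ∈ L`:
(i) `u i · (e₁ - e₂) ∈ L` for every `i`; (ii) `g_L · (e₁ - e₂) ∈ L`, where `g_L` is the
nonnegative generator of the subgroup of `ℤ` generated by all entries of elements of `L`. -/
theorem entry_multiple_mem (L : AddSubgroup (ℕ →₀ ℤ))
    (hL : ∀ σ, IsFinPerm σ → ∀ u ∈ L, permAct0 σ u ∈ L)
    (u : ℕ →₀ ℤ) (hu : u ∈ L) :
    (∀ i : ℕ, (u i) • (Finsupp.single 0 (1 : ℤ) - Finsupp.single 1 (1 : ℤ)) ∈ L) ∧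
    (∀ g : ℤ, 0 ≤ g →
      AddSubgroup.closure {z : ℤ | ∃ v ∈ L, ∃ i : ℕ, v i = z} = AddSubgroup.zmultiples g →
      g • (Finsupp.single 0 (1 : ℤ) - Finsupp.single 1 (1 : ℤ)) ∈ L) := by
  constructor
  · exact fun i => key_step L hL u hu i
  · intro g hg hgen
    set x : ℕ →₀ ℤ := Finsupp.single 0 (1 : ℤ) - Finsupp.single 1 (1 : ℤ) with hx
    have hsub : AddSubgroup.closure {z : ℤ | ∃ v ∈ L, ∃ i : ℕ, v i = z} ≤
        L.comap (zmultiplesHom (ℕ →₀ ℤ) x) := by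
      apply AddSubgroup.closure_le _ |>.mpr
      rintro z ⟨v, hv, i, rfl⟩
      exact key_step L hL v hv i
    have hgmem : g ∈ AddSubgroup.closure {z : ℤ | ∃ v ∈ L, ∃ i : ℕ, v i = z} := by
      rw [hgen]
      exact AddSubgroup.mem_zmultiples g
    exact hsub hgmem
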